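/- If two formal deformations (≺_t, ≻_t) and (≺'_t, ≻'_t) of a dendriform algebra A are equivalent via φ_t = Σ φ_i t^i with φ_0 = id, then their infinitesimals are cohomologous: π_1 - π'_1 = δ_dend(φ_1). -/

import Mathlib

section

variable {K A : Type*} [Field K] [AddCommGroup A] [Module K A]

/-- Components of the circle product `f ∘ g = f ∘₁ g - f ∘₂ g` of 2-cochains
in the dendriform operad, at the three labels of `C₃`. -/
def circ2_0 (f g : ℕ → A →ₗ[K] A →ₗ[K] A) (a b c : A) : A :=
  f 0 (g 0 a b) c - f 0 a (g 0 b c + g 1 b c)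

def circ2_1 (f g : ℕ → A →ₗ[K] A →ₗ[K] A) (a b c : A) : A :=
  f 0 (g 1 a b) c - f 1 a (g 0 b c)

def circ2_2 (f g : ℕ → A →ₗ[K] A →ₗ[K] A) (a b c : A) : A :=
  f 1 (g 0 a b + g 1 a b) c - f 1 a (g 1 b c)

end

theorem linear_coeff_of_formal_equivalence {R M : Type*} [CommSemiring R] [AddCommMonoid M]
    [Module R M] (μ μ' : ℕ → M →ₗ[R] M →ₗ[R] M) (φ : ℕ → M →ₗ[R] M)
    (hφ0 : φ 0 = LinearMap.id) (a b : M)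
    (h : ∑ i ∈ Finset.range (1 + 1), φ i (μ (1 - i) a b)
        = ∑ i ∈ Finset.range (1 + 1), ∑ j ∈ Finset.range (1 + 1 - i),
            μ' (1 - i - j) (φ i a) (φ j b)) :
    μ 1 a b + φ 1 (μ 0 a b) = μ' 1 a b + μ' 0 a (φ 1 b) + μ' 0 (φ 1 a) b := by
  simpa [Finset.sum_range_succ, hφ0, add_assoc] using h

theorem equivalent_deformations_cohomologous_infinitesimals_general
    {K A : Type*} [Field K] [AddCommGroup A] [Module K A]
    (π π' : ℕ → ℕ → A →ₗ[K] A →ₗ[K] A)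
    (hbase : π 0 = π' 0)
    (φ : ℕ → A →ₗ[K] A)
    (hφ0 : φ 0 = LinearMap.id)
    -- equivalence: φ_t (a ≺_t b) = φ_t a ≺'_t φ_t b and likewise for ≻,
    -- i.e. Σ_{i+j=n} φ_i (π_j [r] a b) = Σ_{i+j+k=n} π'_k [r] (φ_i a) (φ_j b):
    (hequiv : ∀ (n : ℕ), ∀ r < 2, ∀ a b : A,
      ∑ i ∈ Finset.range (n + 1), φ i (π (n - i) r a b)
        = ∑ i ∈ Finset.range (n + 1), ∑ j ∈ Finset.range (n + 1 - i),
            π' (n - i - j) r (φ i a) (φ j b)) :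
    ∀ r < 2, ∀ a b : A,
      π 1 r a b - π' 1 r a b
        = π 0 r (φ 1 a) b + π 0 r a (φ 1 b) - φ 1 (π 0 r a b) := by
  intro r hr a b
  have h := linear_coeff_of_formal_equivalence (fun k => π k r) (fun k => π' k r) φ hφ0 a b
    (hequiv 1 r hr a b)
  rw [hbase] at h ⊢
  linear_combination (norm := abel) h

/-- if two formal deformations `π = (π_i)` and `π' = (π'_i)` of a
dendriform algebra `A` (with common base `π_0 = π'_0 = π_A`) are equivalent via
`φ_t = Σ φ_i t^i` with `φ_0 = id`, then their infinitesimals are cohomologous: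
`π_1 - π'_1 = δ_dend(φ_1)`. -/
theorem equivalent_deformations_cohomologous_infinitesimals
    {K A : Type*} [Field K] [AddCommGroup A] [Module K A]
    (π π' : ℕ → ℕ → A →ₗ[K] A →ₗ[K] A)
    (hbase : π 0 = π' 0)
    (hdef0 : ∀ (n : ℕ) (a b c : A),
      ∑ i ∈ Finset.range (n + 1), circ2_0 (π i) (π (n - i)) a b c = 0)
    (hdef1 : ∀ (n : ℕ) (a b c : A),
      ∑ i ∈ Finset.range (n + 1), circ2_1 (π i) (π (n - i)) a b c = 0)
    (hdef2 : ∀ (n : ℕ) (a b c : A),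
      ∑ i ∈ Finset.range (n + 1), circ2_2 (π i) (π (n - i)) a b c = 0)
    (hdef0' : ∀ (n : ℕ) (a b c : A),
      ∑ i ∈ Finset.range (n + 1), circ2_0 (π' i) (π' (n - i)) a b c = 0)
    (hdef1' : ∀ (n : ℕ) (a b c : A),
      ∑ i ∈ Finset.range (n + 1), circ2_1 (π' i) (π' (n - i)) a b c = 0)
    (hdef2' : ∀ (n : ℕ) (a b c : A),
      ∑ i ∈ Finset.range (n + 1), circ2_2 (π' i) (π' (n - i)) a b c = 0)
    (φ : ℕ → A →ₗ[K] A)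
    (hφ0 : φ 0 = LinearMap.id)
    -- equivalence: φ_t (a ≺_t b) = φ_t a ≺'_t φ_t b and likewise for ≻,
    -- i.e. Σ_{i+j=n} φ_i (π_j [r] a b) = Σ_{i+j+k=n} π'_k [r] (φ_i a) (φ_j b):
    (hequiv : ∀ (n : ℕ), ∀ r < 2, ∀ a b : A,
      ∑ i ∈ Finset.range (n + 1), φ i (π (n - i) r a b)
        = ∑ i ∈ Finset.range (n + 1), ∑ j ∈ Finset.range (n + 1 - i),
            π' (n - i - j) r (φ i a) (φ j b)) :
    ∀ r < 2, ∀ a b : A,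
      π 1 r a b - π' 1 r a b
        = π 0 r (φ 1 a) b + π 0 r a (φ 1 b) - φ 1 (π 0 r a b) :=
  equivalent_deformations_cohomologous_infinitesimals_general π π' hbase φ hφ0 hequiv
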